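/- Let k ≥ 3 be an integer and let T be a finite tree. If Δ(T) > 4·3^(k-3), then χ_L(T) > k; equivalently, T admits no locating k-coloring. -/

import Mathlib

/-- A proper `k`-coloring of `G`: a function onto the `k` colors such that
adjacent vertices receive different colors. -/
def IsProperColoring {V : Type*} (G : SimpleGraph V) (k : ℕ) (f : V → Fin k) : Prop :=
  Function.Surjective f ∧ ∀ u v : V, G.Adj u v → f u ≠ f v

/-- The color code of a vertex `v`: its `i`-th coordinate is the distance from `v`
to the color class `f⁻¹(i)`. -/
noncomputable def colorCode {V : Type*} (G : SimpleGraph V) {k : ℕ} (f : V → Fin k)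
    (v : V) : Fin k → ℕ :=
  fun i => sInf {n : ℕ | ∃ u : V, f u = i ∧ G.dist v u = n}

/-- A locating `k`-coloring: a proper `k`-coloring in which distinct vertices have
distinct color codes. -/
def IsLocatingColoring {V : Type*} (G : SimpleGraph V) (k : ℕ) (f : V → Fin k) : Prop :=
  IsProperColoring G k f ∧ Function.Injective (colorCode G f)

/-- The locating chromatic number: the least `k` admitting a locating `k`-coloring. -/
noncomputable def locatingChromaticNumber {V : Type*} (G : SimpleGraph V) : ℕ :=
  sInf {k : ℕ | ∃ f : V → Fin k, IsLocatingColoring G k f}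

/-!
Let `v` be a vertex of a connected graph with a locating coloring by `k` colors, let `C` be the
set of colors seen on the neighbours of `v`, and `c = |C|`. Every neighbour `u` of `v` has code
`1` at `f v`, `0` at `f u`, a value in `{1, 2}` at the other colors of `C`, and a value within
`1` of the code of `v` at each of the `k - 1 - c` remaining colors. As codes are distinct, each
color of `C` occurs on at most `2 ^ (c - 1) * 3 ^ (k - 1 - c)` neighbours, so
`deg v ≤ c * 2 ^ (c - 1) * 3 ^ (k - 1 - c) ≤ 4 * 3 ^ (k - 3)`.
-/

lemma add_two_mul_two_pow_succ_le (d : ℕ) : (d + 2) * 2 ^ (d + 1) ≤ 4 * 3 ^ d := by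
  induction d with
  | zero => norm_num
  | succ d ih =>
    calc (d + 3) * 2 ^ (d + 2) = 2 * (d + 3) * 2 ^ (d + 1) := by ring
      _ ≤ 3 * (d + 2) * 2 ^ (d + 1) := Nat.mul_le_mul_right _ (by omega)
      _ = 3 * ((d + 2) * 2 ^ (d + 1)) := by ring
      _ ≤ 3 * (4 * 3 ^ d) := Nat.mul_le_mul_left _ ih
      _ = 4 * 3 ^ (d + 1) := by ring

lemma mul_two_pow_mul_three_pow_le {c k : ℕ} (hck : c < k) :
    c * (2 ^ (c - 1) * 3 ^ (k - 1 - c)) ≤ 4 * 3 ^ (k - 3) := by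
  obtain _ | _ | d := c
  · simp
  · have : 3 ^ (k - 2) ≤ 3 ^ (k - 3 + 1) := Nat.pow_le_pow_right (by norm_num) (by omega)
    rw [pow_succ] at this
    simp only [Nat.sub_self, pow_zero, one_mul, show k - 1 - (0 + 1) = k - 2 by omega]
    omega
  · rw [show d + 1 + 1 - 1 = d + 1 from rfl, show k - 1 - (d + 1 + 1) = k - 3 - d by omega]
    calc (d + 2) * (2 ^ (d + 1) * 3 ^ (k - 3 - d))
        = (d + 2) * 2 ^ (d + 1) * 3 ^ (k - 3 - d) := by ring
      _ ≤ 4 * 3 ^ d * 3 ^ (k - 3 - d) :=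
          Nat.mul_le_mul_right _ (add_two_mul_two_pow_succ_le d)
      _ = 4 * 3 ^ (k - 3) := by rw [mul_assoc, ← pow_add, Nat.add_sub_cancel' (by omega)]

section

open SimpleGraph

variable {V : Type*} {G : SimpleGraph V} {k : ℕ} {f : V → Fin k} {u v w : V} {i : Fin k}

lemma colorCode_le_dist (hw : f w = i) : colorCode G f v i ≤ G.dist v w :=
  Nat.sInf_le ⟨w, hw, rfl⟩

-- Surjectivity makes the infimum attained; otherwise it is `sInf ∅ = 0`.
lemma exists_dist_eq_colorCode (hsurj : Function.Surjective f) (v : V) (i : Fin k) :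
    ∃ w, f w = i ∧ G.dist v w = colorCode G f v i :=
  Nat.sInf_mem (s := {n | ∃ w, f w = i ∧ G.dist v w = n})
    (let ⟨w, hw⟩ := hsurj i; ⟨_, w, hw, rfl⟩)

lemma colorCode_self (v : V) : colorCode G f v (f v) = 0 :=
  Nat.le_zero.mp (dist_self (G := G) (v := v) ▸ colorCode_le_dist rfl)

lemma SimpleGraph.Connected.colorCode_eq_zero_iff (hG : G.Connected)
    (hsurj : Function.Surjective f) :
    colorCode G f v i = 0 ↔ f v = i := by
  refine ⟨fun h => ?_, fun h => h ▸ colorCode_self v⟩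
  obtain ⟨w, hw, hvw⟩ := exists_dist_eq_colorCode (G := G) hsurj v i
  rwa [hG.dist_eq_zero_iff.mp (hvw.trans h)]

lemma SimpleGraph.Connected.colorCode_le_colorCode_add_one_of_adj (hG : G.Connected)
    (hsurj : Function.Surjective f) (huv : G.Adj u v) (i : Fin k) :
    colorCode G f u i ≤ colorCode G f v i + 1 := by
  obtain ⟨w, hw, hvw⟩ := exists_dist_eq_colorCode (G := G) hsurj v i
  calc colorCode G f u i ≤ G.dist u w := colorCode_le_dist hw
    _ ≤ G.dist u v + G.dist v w := hG.dist_triangle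
    _ = colorCode G f v i + 1 := by rw [dist_eq_one_iff_adj.mpr huv, hvw, add_comm]

lemma SimpleGraph.Connected.colorCode_eq_one_of_adj (hG : G.Connected)
    (hf : IsProperColoring G k f) (huv : G.Adj u v) : colorCode G f u (f v) = 1 := by
  have h1 : colorCode G f u (f v) ≤ 1 := dist_eq_one_iff_adj.mpr huv ▸ colorCode_le_dist rfl
  have h0 : colorCode G f u (f v) ≠ 0 := fun h =>
    hf.2 u v huv ((hG.colorCode_eq_zero_iff hf.1).mp h)
  omega

lemma SimpleGraph.Connected.colorCode_mem_Icc_of_adj (hG : G.Connected)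
    (hsurj : Function.Surjective f) (hvu : G.Adj v u) (i : Fin k) :
    colorCode G f u i ∈ Finset.Icc (colorCode G f v i - 1) (colorCode G f v i + 1) := by
  have := hG.colorCode_le_colorCode_add_one_of_adj hsurj hvu i
  have := hG.colorCode_le_colorCode_add_one_of_adj hsurj hvu.symm i
  simp only [Finset.mem_Icc]
  omega

lemma IsLocatingColoring.eq_of_adj_of_colorCode_eq (hG : G.Connected)
    (hf : IsLocatingColoring G k f) {u₁ u₂ : V} (hvu₁ : G.Adj v u₁) (hvu₂ : G.Adj v u₂)
    (hfu : f u₁ = f u₂)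
    (hcode : ∀ i, i ≠ f v → f u₁ ≠ i → colorCode G f u₁ i = colorCode G f u₂ i) :
    u₁ = u₂ := by
  refine hf.2 (funext fun i => ?_)
  by_cases hi : i = f v
  · rw [hi, hG.colorCode_eq_one_of_adj hf.1 hvu₁.symm,
      hG.colorCode_eq_one_of_adj hf.1 hvu₂.symm]
  by_cases hiu : f u₁ = i
  · rw [← hiu, colorCode_self, hfu, colorCode_self]
  exact hcode i hi hiu

def neighborColors (G : SimpleGraph V) (f : V → Fin k) (v : V) [Fintype (G.neighborSet v)] :
    Finset (Fin k) :=
  (G.neighborFinset v).image f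

section

variable [Fintype (G.neighborSet v)]

lemma SimpleGraph.Connected.colorCode_mem_one_two_of_adj (hG : G.Connected)
    (hf : IsProperColoring G k f) (hvu : G.Adj v u) (hi : i ∈ neighborColors G f v)
    (hiu : f u ≠ i) : colorCode G f u i ∈ ({1, 2} : Finset ℕ) := by
  obtain ⟨w, hw, rfl⟩ := Finset.mem_image.mp hi
  have hvw : colorCode G f v (f w) = 1 :=
    hG.colorCode_eq_one_of_adj hf ((mem_neighborFinset G v w).mp hw)
  have h2 := hG.colorCode_le_colorCode_add_one_of_adj hf.1 hvu.symm (f w)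
  have h0 : colorCode G f u (f w) ≠ 0 := fun h => hiu ((hG.colorCode_eq_zero_iff hf.1).mp h)
  simp only [Finset.mem_insert, Finset.mem_singleton]
  omega

lemma IsProperColoring.notMem_neighborColors (hf : IsProperColoring G k f) :
    f v ∉ neighborColors G f v := fun h => by
  obtain ⟨w, hw, hwv⟩ := Finset.mem_image.mp h
  exact hf.2 v w ((mem_neighborFinset G v w).mp hw) hwv.symm

open Finset in
lemma IsLocatingColoring.card_filter_neighborFinset_le (hG : G.Connected)
    (hf : IsLocatingColoring G k f) {i₀ : Fin k} (hi₀ : i₀ ∈ neighborColors G f v) :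
    ((G.neighborFinset v).filter (f · = i₀)).card ≤
      2 ^ ((neighborColors G f v).card - 1) * 3 ^ (k - 1 - (neighborColors G f v).card) := by
  set C := neighborColors G f v
  set R := (insert (f v) C)ᶜ
  have hfvC : f v ∉ C := hf.1.notMem_neighborColors
  let Φ : V → (C.erase i₀ → ℕ) × (R → ℕ) :=
    fun u => (fun i => colorCode G f u i, fun i => colorCode G f u i)
  let T : Finset ((C.erase i₀ → ℕ) × (R → ℕ)) :=
    Fintype.piFinset (fun _ : C.erase i₀ => {1, 2}) ×ˢ
      Fintype.piFinset (fun i : R => Icc (colorCode G f v i - 1) (colorCode G f v i + 1))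
  have hmaps : Set.MapsTo Φ ((G.neighborFinset v).filter (f · = i₀)) T := by
    intro u hu
    obtain ⟨hvu, rfl⟩ := mem_filter.mp hu
    rw [mem_neighborFinset] at hvu
    refine mem_product.mpr ⟨Fintype.mem_piFinset.mpr fun i => ?_,
      Fintype.mem_piFinset.mpr fun i => hG.colorCode_mem_Icc_of_adj hf.1.1 hvu i⟩
    exact hG.colorCode_mem_one_two_of_adj hf.1 hvu (mem_of_mem_erase i.2)
      (ne_of_mem_erase i.2).symm
  have hinj : Set.InjOn Φ ((G.neighborFinset v).filter (f · = i₀)) := by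
    intro u₁ hu₁ u₂ hu₂ hΦ
    obtain ⟨hvu₁, rfl⟩ := mem_filter.mp hu₁
    obtain ⟨hvu₂, hfu⟩ := mem_filter.mp hu₂
    rw [mem_neighborFinset] at hvu₁ hvu₂
    refine hf.eq_of_adj_of_colorCode_eq hG hvu₁ hvu₂ hfu.symm fun i hi hiu => ?_
    by_cases hiC : i ∈ C
    · exact congrFun (congrArg Prod.fst hΦ) ⟨i, mem_erase.mpr ⟨Ne.symm hiu, hiC⟩⟩
    · exact congrFun (congrArg Prod.snd hΦ) ⟨i, by simp [R, hi, hiC]⟩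
  have hcard : T.card ≤ 2 ^ (C.card - 1) * 3 ^ (k - 1 - C.card) := by
    have hR : R.card = k - 1 - C.card := by
      rw [card_compl, card_insert_of_notMem hfvC, Fintype.card_fin]; omega
    rw [card_product, Fintype.card_piFinset, Fintype.card_piFinset, prod_const, card_univ,
      Fintype.card_coe, card_erase_of_mem hi₀, ← hR, ← Fintype.card_coe R, ← card_univ]
    refine Nat.mul_le_mul_left _ (prod_le_pow_card _ _ _ fun i _ => ?_)
    rw [Nat.card_Icc]
    omega
  exact (card_le_card_of_injOn Φ hmaps hinj).trans hcard

lemma IsLocatingColoring.degree_le (hG : G.Connected) (hf : IsLocatingColoring G k f) :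
    G.degree v ≤ 4 * 3 ^ (k - 3) := by
  set C := neighborColors G f v
  calc G.degree v = ∑ i ∈ C, ((G.neighborFinset v).filter (f · = i)).card := by
        rw [← card_neighborFinset_eq_degree]; exact Finset.card_eq_sum_card_image f _
    _ ≤ C.card • (2 ^ (C.card - 1) * 3 ^ (k - 1 - C.card)) :=
        Finset.sum_le_card_nsmul _ _ _ fun _ hi => hf.card_filter_neighborFinset_le hG hi
    _ ≤ 4 * 3 ^ (k - 3) := by
        have hCk := Finset.card_lt_univ_of_notMem hf.1.notMem_neighborColors (s := C)
        rw [Fintype.card_fin] at hCk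
        exact mul_two_pow_mul_three_pow_le hCk

end

lemma IsLocatingColoring.maxDegree_le [Fintype V] [DecidableRel G.Adj] (hG : G.Connected)
    (hf : IsLocatingColoring G k f) : G.maxDegree ≤ 4 * 3 ^ (k - 3) :=
  G.maxDegree_le_of_forall_degree_le _ fun _ => hf.degree_le hG

lemma SimpleGraph.Connected.exists_isLocatingColoring [Fintype V] (hG : G.Connected) :
    ∃ f : V → Fin (Fintype.card V), IsLocatingColoring G _ f := by
  let e := Fintype.equivFin V
  refine ⟨e, ⟨e.surjective, fun u w huw h => G.ne_of_adj huw (e.injective h)⟩,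
    fun x y hxy => ?_⟩
  have h0 : colorCode G e y (e x) = 0 := hxy ▸ colorCode_self x
  exact e.injective ((hG.colorCode_eq_zero_iff e.surjective).mp h0).symm

lemma SimpleGraph.Connected.exists_isLocatingColoring_locatingChromaticNumber [Fintype V]
    (hG : G.Connected) :
    ∃ f : V → Fin (locatingChromaticNumber G), IsLocatingColoring G _ f :=
  Nat.sInf_mem (s := {k | ∃ f : V → Fin k, IsLocatingColoring G k f})
    ⟨_, hG.exists_isLocatingColoring⟩

end

theorem locatingChromaticNumber_gt_of_maxDegree_general {V : Type*} [Fintype V]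
    (G : SimpleGraph V) [DecidableRel G.Adj] (hT : G.IsTree) (k : ℕ)
    (h : 4 * 3 ^ (k - 3) < G.maxDegree) :
    k < locatingChromaticNumber G ∧ ¬ ∃ f : V → Fin k, IsLocatingColoring G k f := by
  have hG := hT.connected
  have hnone : ∀ j ≤ k, ¬ ∃ f : V → Fin j, IsLocatingColoring G j f := by
    rintro j hjk ⟨f, hf⟩
    have hΔ := hf.maxDegree_le hG
    have : 3 ^ (j - 3) ≤ 3 ^ (k - 3) := Nat.pow_le_pow_right (by norm_num) (by omega)
    omega
  refine ⟨?_, hnone k le_rfl⟩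
  by_contra! hle
  exact hnone _ hle hG.exists_isLocatingColoring_locatingChromaticNumber

/-- Contrapositive form of Theorem 2.3: if `T` is a finite tree with
`Δ(T) > 4 * 3^(k-3)` for some `k ≥ 3`, then `χ_L(T) > k`; equivalently, `T` admits
no locating `k`-coloring. -/
theorem locatingChromaticNumber_gt_of_maxDegree {V : Type*} [Fintype V]
    (G : SimpleGraph V) [DecidableRel G.Adj] (hT : G.IsTree) (k : ℕ) (hk : 3 ≤ k)
    (h : 4 * 3 ^ (k - 3) < G.maxDegree) :
    k < locatingChromaticNumber G ∧ ¬ ∃ f : V → Fin k, IsLocatingColoring G k f :=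
  locatingChromaticNumber_gt_of_maxDegree_general G hT k h
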